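/- arXiv:1712.05949 — 6 statements merged into one kernel-verified Lean document; each statement's English description precedes it below -/
import Mathlib

section
/- Let g : ℝ → [0,1] be a measurable function. Then the function q ↦ ((q+1)/2 · ∫_{-∞}^{∞} |t|^q g(t) dt)^{1/(q+1)} is non-decreasing on (-1, ∞). That is, for all -1 < q < p, ((q+1)/2 · ∫ |t|^q g(t) dt)^{1/(q+1)} ≤ ((p+1)/2 · ∫ |t|^p g(t) dt)^{1/(p+1)}. -/
/-! It suffices that a normalized `q`-th moment of `g` of at least `a` forces a normalized `p`-th
moment of at least `a`; the indicator of `[-a, a]` has normalized moment exactly `a` for every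
exponent. Since `g ≤ 1`, the `|t|^q dt`-mass that `g` misses inside `[-a, a]` is at most the mass it
carries outside. Passing to the weight `|t|^p = |t|^(p-q) |t|^q` multiplies the first mass by at
most `a^(p-q)` and the second by at least `a^(p-q)`, so the `p`-th moment of `g` dominates that of
the indicator (the bathtub principle). -/

open MeasureTheory Set
open scoped ENNReal

namespace MeasureTheory

variable {α : Type*} [MeasurableSpace α] {μ : Measure α}

theorem lintegral_eq_lintegral_mul_add_lintegral_mul_one_sub {f g : α → ℝ≥0∞}
    (hf : Measurable f) (hg : Measurable g) (hg1 : ∀ x, g x ≤ 1) :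
    ∫⁻ x, f x ∂μ = ∫⁻ x, f x * g x ∂μ + ∫⁻ x, f x * (1 - g x) ∂μ := by
  rw [← lintegral_add_left (by fun_prop : Measurable fun x => f x * g x)]
  congr 1 with x
  rw [← mul_add, add_tsub_cancel_of_le (hg1 x), mul_one]

theorem setLIntegral_le_lintegral_mul_of_setLIntegral_le {s : Set α} (hs : MeasurableSet s)
    {f F g : α → ℝ≥0∞} {c : ℝ≥0∞} (hf : Measurable f) (hF : Measurable F) (hg : Measurable g)
    (hg1 : ∀ x, g x ≤ 1) (hF_le : ∀ᵐ x ∂μ, x ∈ s → F x ≤ c * f x)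
    (hF_ge : ∀ᵐ x ∂μ, x ∉ s → c * f x ≤ F x) (hfs : ∫⁻ x in s, f x ∂μ ≠ ∞)
    (hmass : ∫⁻ x in s, f x ∂μ ≤ ∫⁻ x, f x * g x ∂μ) :
    ∫⁻ x in s, F x ∂μ ≤ ∫⁻ x, F x * g x ∂μ := by
  have hdeficit : ∫⁻ x in s, f x * (1 - g x) ∂μ ≤ ∫⁻ x in sᶜ, f x * g x ∂μ := by
    have hfin : ∫⁻ x in s, f x * g x ∂μ ≠ ∞ :=
      ne_top_of_le_ne_top hfs (lintegral_mono fun x => mul_le_of_le_one_right' (hg1 x))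
    rw [← ENNReal.add_le_add_iff_left hfin,
      ← lintegral_eq_lintegral_mul_add_lintegral_mul_one_sub hf hg hg1,
      lintegral_add_compl _ hs]
    exact hmass
  calc ∫⁻ x in s, F x ∂μ
      = ∫⁻ x in s, F x * g x ∂μ + ∫⁻ x in s, F x * (1 - g x) ∂μ :=
        lintegral_eq_lintegral_mul_add_lintegral_mul_one_sub hF hg hg1
    _ ≤ ∫⁻ x in s, F x * g x ∂μ + ∫⁻ x in s, c * (f x * (1 - g x)) ∂μ := by
        gcongr 1
        refine lintegral_mono_ae ?_
        filter_upwards [ae_restrict_mem hs, ae_restrict_of_ae hF_le] with x hx hFx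
        rw [← mul_assoc]
        gcongr
        exact hFx hx
    _ ≤ ∫⁻ x in s, F x * g x ∂μ + c * ∫⁻ x in sᶜ, f x * g x ∂μ := by
        rw [lintegral_const_mul _ (by fun_prop : Measurable fun x => f x * (1 - g x))]
        gcongr
    _ ≤ ∫⁻ x in s, F x * g x ∂μ + ∫⁻ x in sᶜ, F x * g x ∂μ := by
        gcongr
        refine (lintegral_const_mul_le _ _).trans (lintegral_mono_ae ?_)
        filter_upwards [ae_restrict_mem hs.compl, ae_restrict_of_ae hF_ge] with x hx hFx
        rw [← mul_assoc]
        gcongr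
        exact hFx hx
    _ = ∫⁻ x, F x * g x ∂μ := lintegral_add_compl _ hs

end MeasureTheory

theorem intervalIntegrable_abs_rpow {r : ℝ} (hr : -1 < r) (a b : ℝ) :
    IntervalIntegrable (fun t : ℝ => |t| ^ r) volume a b := by
  have h0 : ∀ c, 0 ≤ c → IntervalIntegrable (fun t : ℝ => |t| ^ r) volume 0 c := fun c hc =>
    (intervalIntegral.intervalIntegrable_rpow' hr).congr fun t ht => by
      rw [uIoc_of_le hc] at ht
      simp only [abs_of_pos ht.1]
  have h : ∀ c, IntervalIntegrable (fun t : ℝ => |t| ^ r) volume 0 c := by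
    intro c
    rcases le_total 0 c with hc | hc
    · exact h0 c hc
    · simpa using (IntervalIntegrable.iff_comp_neg).mp (h0 (-c) (by linarith))
  exact (h a).symm.trans (h b)

theorem integral_abs_rpow_symm {r a : ℝ} (hr : -1 < r) (ha : 0 ≤ a) :
    ∫ t in -a..a, |t| ^ r = 2 * a ^ (r + 1) / (r + 1) := by
  have hpos : ∫ t in (0 : ℝ)..a, |t| ^ r = a ^ (r + 1) / (r + 1) := by
    rw [intervalIntegral.integral_congr (g := fun t : ℝ => t ^ r), integral_rpow (Or.inl hr),
      Real.zero_rpow (by linarith), sub_zero]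
    intro t ht
    rw [uIcc_of_le ha] at ht
    simp only [abs_of_nonneg ht.1]
  have hneg : ∫ t in -a..0, |t| ^ r = ∫ t in (0 : ℝ)..a, |t| ^ r := by
    simpa using
      (intervalIntegral.integral_comp_neg (a := 0) (b := a) (fun t : ℝ => |t| ^ r)).symm
  rw [← intervalIntegral.integral_add_adjacent_intervals (intervalIntegrable_abs_rpow hr _ _)
    (intervalIntegrable_abs_rpow hr _ _), hneg, hpos]
  ring

theorem lintegral_Icc_abs_rpow {r a : ℝ} (hr : -1 < r) (ha : 0 ≤ a) :
    ∫⁻ t in Icc (-a) a, ENNReal.ofReal (|t| ^ r) =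
      ENNReal.ofReal (2 * a ^ (r + 1) / (r + 1)) := by
  rw [← setLIntegral_congr Ioc_ae_eq_Icc, ← ofReal_integral_eq_lintegral_ofReal
      (intervalIntegrable_abs_rpow hr (-a) a).1 (.of_forall fun t => by positivity),
    ← intervalIntegral.integral_of_le (by linarith), integral_abs_rpow_symm hr ha]

theorem ofReal_mul_lintegral_Icc_abs_rpow {r a : ℝ} (hr : -1 < r) (ha : 0 ≤ a) :
    ENNReal.ofReal ((r + 1) / 2) * ∫⁻ t in Icc (-a) a, ENNReal.ofReal (|t| ^ r) =
      ENNReal.ofReal a ^ (r + 1) := by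
  have hr1 : 0 < r + 1 := by linarith
  rw [lintegral_Icc_abs_rpow hr ha, ← ENNReal.ofReal_mul (by positivity),
    ENNReal.ofReal_rpow_of_nonneg ha hr1.le]
  congr 1
  field_simp

noncomputable def scaledMoment (g : ℝ → ℝ) (r : ℝ) : ℝ≥0∞ :=
  ENNReal.ofReal ((r + 1) / 2) * ∫⁻ t, ENNReal.ofReal (|t| ^ r * g t)

theorem ofReal_rpow_le_scaledMoment_of_lt {g : ℝ → ℝ} (hg : Measurable g)
    (hg1 : ∀ t, g t ≤ 1) {q p a : ℝ} (hq : -1 < q) (hqp : q < p)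
    (ha : 0 ≤ a) (h : ENNReal.ofReal a ^ (q + 1) ≤ scaledMoment g q) :
    ENNReal.ofReal a ^ (p + 1) ≤ scaledMoment g p := by
  have hmul : ∀ (r : ℝ) t,
      ENNReal.ofReal (|t| ^ r * g t) = ENNReal.ofReal (|t| ^ r) * ENNReal.ofReal (g t) :=
    fun r t => ENNReal.ofReal_mul (by positivity)
  have hsplit : ∀ {x : ℝ}, 0 < x → x ^ p = x ^ (p - q) * x ^ q := fun hx => by
    rw [← Real.rpow_add hx, sub_add_cancel]
  have hmass : ∫⁻ t in Icc (-a) a, ENNReal.ofReal (|t| ^ q) ≤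
      ∫⁻ t, ENNReal.ofReal (|t| ^ q) * ENNReal.ofReal (g t) := by
    rw [← ofReal_mul_lintegral_Icc_abs_rpow hq ha, scaledMoment] at h
    simp only [hmul] at h
    exact (ENNReal.mul_le_mul_iff_right (ENNReal.ofReal_pos.2 (by linarith)).ne'
      ENNReal.ofReal_ne_top).1 h
  -- `t = 0` is excluded because `0 ^ 0 = 1` breaks the bound when `p = 0`.
  have hne : ∀ᵐ t : ℝ, t ≠ 0 := by simp [ae_iff]
  have hinside : ∀ᵐ t : ℝ, t ∈ Icc (-a) a →
      ENNReal.ofReal (|t| ^ p) ≤ ENNReal.ofReal (a ^ (p - q)) * ENNReal.ofReal (|t| ^ q) := by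
    filter_upwards [hne] with t ht hts
    have habs : 0 < |t| := abs_pos.2 ht
    rw [← ENNReal.ofReal_mul (by positivity), hsplit habs]
    gcongr
    exact abs_le.2 hts
  have houtside : ∀ᵐ t : ℝ, t ∉ Icc (-a) a →
      ENNReal.ofReal (a ^ (p - q)) * ENNReal.ofReal (|t| ^ q) ≤ ENNReal.ofReal (|t| ^ p) := by
    refine .of_forall fun t hts => ?_
    have hat : a < |t| := lt_of_not_ge fun h => hts (abs_le.1 h)
    rw [← ENNReal.ofReal_mul (by positivity), hsplit (ha.trans_lt hat)]
    gcongr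
  rw [← ofReal_mul_lintegral_Icc_abs_rpow (hq.trans hqp) ha, scaledMoment]
  simp only [hmul]
  refine mul_le_mul' le_rfl (setLIntegral_le_lintegral_mul_of_setLIntegral_le measurableSet_Icc
    (by fun_prop) (by fun_prop) (by fun_prop) (fun t => ENNReal.ofReal_le_one.2 (hg1 t))
    hinside houtside ?_ hmass)
  rw [lintegral_Icc_abs_rpow hq ha]
  exact ENNReal.ofReal_ne_top

theorem moment_monotone_general
    (g : ℝ → ℝ) (hg : Measurable g) (hg1 : ∀ t, g t ≤ 1)
    (q p : ℝ) (hq : -1 < q) (hqp : q < p) :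
    (ENNReal.ofReal ((q + 1) / 2) *
        ∫⁻ t : ℝ, ENNReal.ofReal (|t| ^ q * g t)) ^ (1 / (q + 1)) ≤
      (ENNReal.ofReal ((p + 1) / 2) *
        ∫⁻ t : ℝ, ENNReal.ofReal (|t| ^ p * g t)) ^ (1 / (p + 1)) := by
  show scaledMoment g q ^ (1 / (q + 1)) ≤ scaledMoment g p ^ (1 / (p + 1))
  refine le_of_forall_lt_imp_le_of_dense fun c hc => ?_
  obtain ⟨a, ha, rfl⟩ : ∃ a, 0 ≤ a ∧ ENNReal.ofReal a = c :=
    ⟨c.toReal, ENNReal.toReal_nonneg, ENNReal.ofReal_toReal hc.ne_top⟩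
  rw [one_div, ENNReal.lt_rpow_inv_iff (by linarith)] at hc
  rw [one_div, ENNReal.le_rpow_inv_iff (by linarith)]
  exact ofReal_rpow_le_scaledMoment_of_lt hg hg1 hq hqp ha hc.le

/-- For measurable `g : ℝ → [0,1]`, the function
`q ↦ ((q+1)/2 · ∫ |t|^q g(t) dt)^(1/(q+1))` is non-decreasing on `(-1, ∞)`.
Integrals are Lebesgue integrals (possibly infinite). -/
theorem moment_monotone
    (g : ℝ → ℝ) (hg : Measurable g) (hg0 : ∀ t, 0 ≤ g t) (hg1 : ∀ t, g t ≤ 1)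
    (q p : ℝ) (hq : -1 < q) (hqp : q < p) :
    (ENNReal.ofReal ((q + 1) / 2) *
        ∫⁻ t : ℝ, ENNReal.ofReal (|t| ^ q * g t)) ^ (1 / (q + 1)) ≤
      (ENNReal.ofReal ((p + 1) / 2) *
        ∫⁻ t : ℝ, ENNReal.ofReal (|t| ^ p * g t)) ^ (1 / (p + 1)) :=
  moment_monotone_general g hg hg1 q p hq hqp
end

section
/- Let g : ℝ → [0,1] be measurable with 0 ≤ g ≤ 1, and let -1 < q < p. Define A ≥ 0 by (2/(q+1)) A^{q+1} = ∫_{-∞}^{∞} |t|^q g(t) dt. Then ∫_{-∞}^{∞} |t|^p g(t) dt ≥ (2/(p+1)) A^{p+1}. -/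
open MeasureTheory Set
open scoped ENNReal

/-!
Bathtub principle. Since `|t| ^ p = |t| ^ (p - q) * |t| ^ q` and `|t| ^ (p - q)` increases with
`|t|`, putting `c = A ^ (p - q)` gives the pointwise inequality
`(|t| ^ p - c * |t| ^ q) * (g t - 𝟙[-A, A] t) ≥ 0`. Integrating it, the `q`-moments of `g` and of
`𝟙[-A, A]` cancel by the choice of `A`, leaving `∫ |t| ^ p g ≥ ∫_{-A}^{A} |t| ^ p`.
-/

theorem setLIntegral_Ioc_rpow {r a : ℝ} (hr : -1 < r) (ha : 0 ≤ a) :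
    ∫⁻ t in Ioc 0 a, ENNReal.ofReal (t ^ r) = ENNReal.ofReal (a ^ (r + 1) / (r + 1)) := by
  have hint : IntegrableOn (fun t : ℝ => t ^ r) (Ioc 0 a) := by
    simpa [intervalIntegrable_iff, uIoc_of_le ha] using
      intervalIntegral.intervalIntegrable_rpow' (a := 0) (b := a) hr
  have hnonneg : 0 ≤ᵐ[volume.restrict (Ioc 0 a)] fun t : ℝ => t ^ r :=
    (ae_restrict_iff' measurableSet_Ioc).2 <| .of_forall fun t ht => Real.rpow_nonneg ht.1.le r
  rw [← ofReal_integral_eq_lintegral_ofReal hint hnonneg, ← intervalIntegral.integral_of_le ha,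
    integral_rpow (.inl hr), Real.zero_rpow (by linarith), sub_zero]

theorem setLIntegral_Icc_neg_comp_abs {f : ℝ → ℝ≥0∞} {a : ℝ} (ha : 0 ≤ a) :
    ∫⁻ t in Icc (-a) a, f |t| = 2 * ∫⁻ t in Ioc 0 a, f t := by
  have hpos : ∫⁻ t in Ioc 0 a, f |t| = ∫⁻ t in Ioc 0 a, f t :=
    setLIntegral_congr_fun measurableSet_Ioc fun t ht => by rw [abs_of_pos ht.1]
  have hneg : ∫⁻ t in Icc (-a) 0, f |t| = ∫⁻ t in Ioc 0 a, f |t| := by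
    have := (Measure.measurePreserving_neg (volume : Measure ℝ)).setLIntegral_comp_preimage_emb
      (Homeomorph.neg ℝ).measurableEmbedding (fun t => f |t|) (Icc 0 a)
    simp only [neg_preimage, neg_Icc, neg_zero, abs_neg] at this
    rw [this, setLIntegral_congr Ioc_ae_eq_Icc]
  rw [← Icc_union_Ioc_eq_Icc (neg_nonpos.2 ha) ha,
    lintegral_union measurableSet_Ioc (disjoint_left.2 fun _ h₁ h₂ => h₁.2.not_gt h₂.1),
    hneg, hpos, two_mul]

theorem setLIntegral_Icc_abs_rpow {r a : ℝ} (hr : -1 < r) (ha : 0 ≤ a) :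
    ∫⁻ t in Icc (-a) a, ENNReal.ofReal (|t| ^ r) =
      ENNReal.ofReal (2 / (r + 1) * a ^ (r + 1)) := by
  rw [setLIntegral_Icc_neg_comp_abs (f := fun t => ENNReal.ofReal (t ^ r)) ha,
    setLIntegral_Ioc_rpow hr ha, ← ENNReal.ofReal_ofNat 2, ← ENNReal.ofReal_mul zero_le_two]
  congr 1
  ring

theorem setLIntegral_le_lintegral_mul_of_bathtub {α : Type*} [MeasurableSpace α]
    {μ : Measure α} {F w g : α → ℝ≥0∞} {s : Set α} {c : ℝ≥0∞}
    (hw : Measurable w) (hg : Measurable g) (hs : MeasurableSet s) (hc : c ≠ ∞)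
    (hg1 : ∀ x, g x ≤ 1) (hin : ∀ᵐ x ∂μ, x ∈ s → F x ≤ c * w x)
    (hout : ∀ᵐ x ∂μ, x ∉ s → c * w x ≤ F x)
    (hmass : ∫⁻ x, w x * g x ∂μ = ∫⁻ x in s, w x ∂μ) (hfin : ∫⁻ x in s, w x ∂μ ≠ ∞) :
    ∫⁻ x in s, F x ∂μ ≤ ∫⁻ x, F x * g x ∂μ := by
  have hpointwise : ∀ᵐ x ∂μ, c * (w x * g x) + s.indicator F x
      ≤ F x * g x + s.indicator (fun x => c * w x) x := by
    filter_upwards [hin, hout] with x hxin hxout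
    by_cases hx : x ∈ s
    · have hsplit : ∀ b : ℝ≥0∞, b = b * g x + b * (1 - g x) := fun b => by
        rw [← mul_add, add_tsub_cancel_of_le (hg1 x), mul_one]
      simp only [indicator_of_mem hx]
      calc c * (w x * g x) + F x = F x * g x + (c * w x * g x + F x * (1 - g x)) := by
            conv_lhs => rw [hsplit (F x)]
            ring
        _ ≤ F x * g x + (c * w x * g x + c * w x * (1 - g x)) := by gcongr; exact hxin hx
        _ = F x * g x + c * w x := by rw [← hsplit]
    · simp only [indicator_of_notMem hx, add_zero, ← mul_assoc]
      gcongr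
      exact hxout hx
  have key := lintegral_mono_ae hpointwise
  rw [lintegral_add_left (f := fun x => c * (w x * g x)) (by fun_prop),
    lintegral_add_right _ ((hw.const_mul c).indicator hs), lintegral_const_mul' _ _ hc,
    lintegral_indicator hs, lintegral_indicator hs, lintegral_const_mul' _ _ hc, hmass,
    add_comm] at key
  exact ENNReal.le_of_add_le_add_right (ENNReal.mul_ne_top hc hfin) key

theorem Real.rpow_le_rpow_sub_mul_rpow {x a p q : ℝ} (hx : 0 < x) (hxa : x ≤ a) (hqp : q ≤ p) :
    x ^ p ≤ a ^ (p - q) * x ^ q := by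
  rw [← sub_add_cancel p q, Real.rpow_add hx, add_sub_cancel_right]
  gcongr

theorem Real.rpow_sub_mul_rpow_le_rpow {x a p q : ℝ} (ha : 0 ≤ a) (hax : a < x) (hqp : q ≤ p) :
    a ^ (p - q) * x ^ q ≤ x ^ p := by
  rw [← sub_add_cancel p q, Real.rpow_add (ha.trans_lt hax), add_sub_cancel_right]
  gcongr
  exact Real.rpow_nonneg (ha.trans hax.le) q

theorem moment_lower_bound_general
    (g : ℝ → ℝ) (hg : Measurable g) (hg1 : ∀ t, g t ≤ 1)
    (q p : ℝ) (hq : -1 < q) (hqp : q < p)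
    (A : ℝ) (hA : 0 ≤ A)
    (hAq : ∫⁻ t : ℝ, ENNReal.ofReal (|t| ^ q * g t) =
      ENNReal.ofReal (2 / (q + 1) * A ^ (q + 1))) :
    ENNReal.ofReal (2 / (p + 1) * A ^ (p + 1)) ≤
      ∫⁻ t : ℝ, ENNReal.ofReal (|t| ^ p * g t) := by
  have hofReal_mul : ∀ r t : ℝ, ENNReal.ofReal (|t| ^ r * g t) =
      ENNReal.ofReal (|t| ^ r) * ENNReal.ofReal (g t) := fun r t =>
    ENNReal.ofReal_mul (Real.rpow_nonneg (abs_nonneg t) r)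
  simp_rw [hofReal_mul] at hAq ⊢
  rw [← setLIntegral_Icc_abs_rpow (hq.trans hqp) hA]
  refine setLIntegral_le_lintegral_mul_of_bathtub (c := ENNReal.ofReal (A ^ (p - q)))
    (by fun_prop) hg.ennreal_ofReal measurableSet_Icc ENNReal.ofReal_ne_top
    (fun t => ENNReal.ofReal_le_one.2 (hg1 t)) ?_ ?_
    (hAq.trans (setLIntegral_Icc_abs_rpow hq hA).symm)
    ((setLIntegral_Icc_abs_rpow hq hA).trans_ne ENNReal.ofReal_ne_top)
  all_goals
    filter_upwards [Measure.ae_ne volume 0] with t ht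
    rw [← ENNReal.ofReal_mul (Real.rpow_nonneg hA _), mem_Icc, ← abs_le]
  · exact fun hle => ENNReal.ofReal_le_ofReal
      (Real.rpow_le_rpow_sub_mul_rpow (abs_pos.2 ht) hle hqp.le)
  · exact fun hlt => ENNReal.ofReal_le_ofReal
      (Real.rpow_sub_mul_rpow_le_rpow hA (not_le.1 hlt) hqp.le)

/-- If `g : ℝ → [0,1]` is measurable, `-1 < q < p`, and `A ≥ 0` satisfies
`(2/(q+1)) A^(q+1) = ∫ |t|^q g(t) dt`, then `∫ |t|^p g(t) dt ≥ (2/(p+1)) A^(p+1)`. -/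
theorem moment_lower_bound
    (g : ℝ → ℝ) (hg : Measurable g) (hg0 : ∀ t, 0 ≤ g t) (hg1 : ∀ t, g t ≤ 1)
    (q p : ℝ) (hq : -1 < q) (hqp : q < p)
    (A : ℝ) (hA : 0 ≤ A)
    (hAq : ∫⁻ t : ℝ, ENNReal.ofReal (|t| ^ q * g t) =
      ENNReal.ofReal (2 / (q + 1) * A ^ (q + 1))) :
    ENNReal.ofReal (2 / (p + 1) * A ^ (p + 1)) ≤
      ∫⁻ t : ℝ, ENNReal.ofReal (|t| ^ p * g t) :=
  moment_lower_bound_general g hg hg1 q p hq hqp A hA hAq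
end

section
/- Let g : ℝ → [0,1] be measurable and integrable. Then ((1/2) ∫_{-∞}^{∞} g(t) dt)^{p+1} ≤ ((p+1)/2) ∫_{-∞}^{∞} |t|^p g(t) dt for every p > 0. Equivalently, (∫ g)^{p+1} ≤ 2^p (p+1) ∫ |t|^p g(t) dt. -/
/-!
Bathtub principle: among `0 ≤ g ≤ 1` of total mass `2a`, the moment `∫ |t|^p g` is smallest for
the indicator of `[-a, a]`, whose moment is `2 a^(p+1) / (p+1)`. Taking `a = (∫ g) / 2` gives
the inequality.
-/

open MeasureTheory Set
open scoped ENNReal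

theorem setIntegral_le_integral_mul_of_le_of_le {α : Type*} [MeasurableSpace α] {μ : Measure α}
    {w g : α → ℝ} {s : Set α} {c : ℝ} (hs : MeasurableSet s) (hμs : μ s ≠ ∞)
    (hw : IntegrableOn w s μ) (hg : Integrable g μ) (hwg : Integrable (fun x ↦ w x * g x) μ)
    (hg0 : ∀ x, 0 ≤ g x) (hg1 : ∀ x, g x ≤ 1)
    (hw_in : ∀ x ∈ s, w x ≤ c) (hw_out : ∀ x ∉ s, c ≤ w x) (hmass : ∫ x, g x ∂μ = μ.real s) :
    ∫ x in s, w x ∂μ ≤ ∫ x, w x * g x ∂μ := by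
  -- `(w - c) (g - 1_s) ≥ 0` pointwise, and `c (g - 1_s)` integrates to zero.
  have hpointwise : ∀ x, c * g x + s.indicator (fun x ↦ w x - c) x ≤ w x * g x := by
    intro x
    by_cases hx : x ∈ s
    · rw [indicator_of_mem hx]
      nlinarith [hw_in x hx, hg1 x]
    · rw [indicator_of_notMem hx]
      nlinarith [hw_out x hx, hg0 x]
  have hind : Integrable (s.indicator fun x ↦ w x - c) μ :=
    (hw.sub (integrableOn_const hμs)).integrable_indicator hs
  have hint := integral_mono (f := fun x ↦ c * g x + s.indicator (fun x ↦ w x - c) x)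
    ((hg.const_mul c).add hind) hwg hpointwise
  rwa [integral_add (hg.const_mul c) hind, integral_const_mul, integral_indicator hs,
    integral_sub hw (integrableOn_const hμs), setIntegral_const, hmass, smul_eq_mul, mul_comm c,
    add_sub_cancel] at hint

theorem integral_abs_rpow_neg_self {a p : ℝ} (ha : 0 ≤ a) (hp : 0 ≤ p) :
    ∫ t in (-a)..a, |t| ^ p = 2 * a ^ (p + 1) / (p + 1) := by
  have hint (b c : ℝ) : IntervalIntegrable (fun t : ℝ ↦ |t| ^ p) volume b c :=
    (continuous_abs.rpow_const fun _ ↦ Or.inr hp).intervalIntegrable b c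
  have hhalf : ∫ t in (0 : ℝ)..a, |t| ^ p = a ^ (p + 1) / (p + 1) := by
    have habs : EqOn (fun t : ℝ ↦ |t| ^ p) (fun t ↦ t ^ p) (uIcc 0 a) := fun t ht ↦ by
      rw [uIcc_of_le ha] at ht
      simp only [abs_of_nonneg ht.1]
    rw [intervalIntegral.integral_congr habs, integral_rpow (Or.inl (by linarith)), Real.zero_rpow (by linarith), sub_zero]
  have hsymm : ∫ t in (-a)..0, |t| ^ p = ∫ t in (0 : ℝ)..a, |t| ^ p := by
    simpa only [abs_neg, neg_zero] using
      (intervalIntegral.integral_comp_neg (a := 0) (b := a) fun t : ℝ ↦ |t| ^ p).symm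
  rw [← intervalIntegral.integral_add_adjacent_intervals (hint (-a) 0) (hint 0 a), hsymm, hhalf]
  ring

theorem integral_abs_rpow_neg_self_le_integral_abs_rpow_mul {g : ℝ → ℝ} {a p : ℝ} (ha : 0 ≤ a)
    (hp : 0 ≤ p) (hg0 : ∀ t, 0 ≤ g t) (hg1 : ∀ t, g t ≤ 1) (hg : Integrable g)
    (hmom : Integrable fun t ↦ |t| ^ p * g t) (hmass : ∫ t, g t = 2 * a) :
    ∫ t in (-a)..a, |t| ^ p ≤ ∫ t, |t| ^ p * g t := by
  have hcont : Continuous fun t : ℝ ↦ |t| ^ p := continuous_abs.rpow_const fun _ ↦ Or.inr hp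
  rw [intervalIntegral.integral_of_le (by linarith), ← integral_Icc_eq_integral_Ioc]
  refine setIntegral_le_integral_mul_of_le_of_le (c := a ^ p) measurableSet_Icc
    measure_Icc_lt_top.ne hcont.integrableOn_Icc hg hmom hg0 hg1 (fun t ht ↦ ?_) (fun t ht ↦ ?_) ?_
  · exact Real.rpow_le_rpow (abs_nonneg t) (abs_le.2 ht) hp
  · exact Real.rpow_le_rpow ha (le_of_not_ge fun h ↦ ht (abs_le.1 h)) hp
  · rw [hmass, Real.volume_real_Icc, max_eq_left (by linarith)]
    ring

theorem half_integral_rpow_le_integral_abs_rpow_mul {g : ℝ → ℝ} {p : ℝ} (hp : 0 ≤ p)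
    (hg0 : ∀ t, 0 ≤ g t) (hg1 : ∀ t, g t ≤ 1) (hg : Integrable g)
    (hmom : Integrable fun t ↦ |t| ^ p * g t) :
    (1 / 2 * ∫ t, g t) ^ (p + 1) ≤ (p + 1) / 2 * ∫ t, |t| ^ p * g t := by
  set a := 1 / 2 * ∫ t, g t
  have ha : 0 ≤ a := mul_nonneg (by norm_num) (integral_nonneg hg0)
  have hbound := integral_abs_rpow_neg_self_le_integral_abs_rpow_mul ha hp hg0 hg1 hg hmom
    (by simp only [a]; ring)
  rw [integral_abs_rpow_neg_self ha hp] at hbound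
  calc a ^ (p + 1) = (p + 1) / 2 * (2 * a ^ (p + 1) / (p + 1)) := by field_simp
    _ ≤ (p + 1) / 2 * ∫ t, |t| ^ p * g t := by gcongr

theorem moment_vs_integral_general
    (g : ℝ → ℝ) (hg0 : ∀ t, 0 ≤ g t) (hg1 : ∀ t, g t ≤ 1)
    (hgint : Integrable g)
    (p : ℝ) (hp : 0 < p) :
    (ENNReal.ofReal (1 / 2) * ∫⁻ t : ℝ, ENNReal.ofReal (g t)) ^ (p + 1) ≤
      ENNReal.ofReal ((p + 1) / 2) * ∫⁻ t : ℝ, ENNReal.ofReal (|t| ^ p * g t) := by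
  have hmom0 : ∀ t : ℝ, 0 ≤ |t| ^ p * g t := fun t ↦ mul_nonneg (by positivity) (hg0 t)
  obtain htop | hfin := eq_or_ne (∫⁻ t : ℝ, ENNReal.ofReal (|t| ^ p * g t)) ∞
  · rw [htop, ENNReal.mul_top (ENNReal.ofReal_pos.2 (by positivity)).ne']
    exact le_top
  have hmom : Integrable fun t : ℝ ↦ |t| ^ p * g t :=
    ⟨((continuous_abs.rpow_const fun _ ↦ Or.inr hp.le).aestronglyMeasurable.mul
      hgint.aestronglyMeasurable),
      (hasFiniteIntegral_iff_ofReal (ae_of_all _ hmom0)).2 hfin.lt_top⟩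
  rw [← ofReal_integral_eq_lintegral_ofReal hgint (ae_of_all _ hg0),
    ← ofReal_integral_eq_lintegral_ofReal hmom (ae_of_all _ hmom0),
    ← ENNReal.ofReal_mul (by norm_num), ← ENNReal.ofReal_mul (by positivity),
    ENNReal.ofReal_rpow_of_nonneg (mul_nonneg (by norm_num) (integral_nonneg hg0)) (by positivity)]
  exact ENNReal.ofReal_le_ofReal
    (half_integral_rpow_le_integral_abs_rpow_mul hp.le hg0 hg1 hgint hmom)

/-- For measurable integrable `g : ℝ → [0,1]` and `p > 0`,
`((1/2) ∫ g)^(p+1) ≤ ((p+1)/2) ∫ |t|^p g(t) dt`. -/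
theorem moment_vs_integral
    (g : ℝ → ℝ) (hg : Measurable g) (hg0 : ∀ t, 0 ≤ g t) (hg1 : ∀ t, g t ≤ 1)
    (hgint : Integrable g)
    (p : ℝ) (hp : 0 < p) :
    (ENNReal.ofReal (1 / 2) * ∫⁻ t : ℝ, ENNReal.ofReal (g t)) ^ (p + 1) ≤
      ENNReal.ofReal ((p + 1) / 2) * ∫⁻ t : ℝ, ENNReal.ofReal (|t| ^ p * g t) :=
  moment_vs_integral_general g hg0 hg1 hgint p hp
end

section
/- Let K and M be origin-symmetric star bodies in ℝⁿ, f : ℝⁿ → [0,∞) even continuous, p ≥ 1, and suppose D is an origin-symmetric star body and a ≥ 1 are such that D ⊆ M ⊆ aD, and there exists a finite Borel measure ν on S^{n-1} with ‖x‖_D^p = ∫_{S^{n-1}} |⟨x,θ⟩|^p dν(θ) for all x ∈ ℝⁿ. If ∫_K |⟨x,ξ⟩|^p f(x) dx ≤ ∫_M |⟨x,ξ⟩|^p f(x) dx for every unit vector ξ, then ∫_K f(x) dx ≤ a^p ∫_M f(x) dx. -/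
open MeasureTheory Metric Set
open scoped RealInnerProductSpace ENNReal Pointwise

/-- A star body: a compact set, star-shaped about the origin, whose Minkowski
functional (gauge) is continuous and positive away from the origin. -/
def IsStarBody {n : ℕ} (K : Set (EuclideanSpace ℝ (Fin n))) : Prop :=
  IsCompact K ∧ (0 : EuclideanSpace ℝ (Fin n)) ∈ K ∧
    (∀ x ∈ K, ∀ t : ℝ, 0 ≤ t → t ≤ 1 → t • x ∈ K) ∧
    Continuous (gauge K) ∧ ∀ x : EuclideanSpace ℝ (Fin n), x ≠ 0 → 0 < gauge K x

lemma IsStarBody.mem_of_gauge_lt_one {n : ℕ} {S : Set (EuclideanSpace ℝ (Fin n))}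
    (hS : IsStarBody S) {x : EuclideanSpace ℝ (Fin n)} (hx : gauge S x < 1) : x ∈ S := by
  obtain ⟨-, h0, hstar, -, hpos⟩ := hS
  rcases eq_or_ne x 0 with rfl | hx0
  · exact h0
  · have hne : {r : ℝ | 0 < r ∧ x ∈ r • S}.Nonempty := by
      by_contra h
      rw [Set.not_nonempty_iff_eq_empty] at h
      have h2 : gauge S x = 0 := by rw [gauge, h, Real.sInf_empty]
      exact absurd h2 (ne_of_gt (hpos x hx0))
    obtain ⟨r, ⟨hr0, hxr⟩, hr1⟩ := exists_lt_of_csInf_lt hne (show sInf _ < (1:ℝ) from hx)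
    obtain ⟨y, hy, rfl⟩ := hxr
    exact hstar y hy r hr0.le hr1.le

abbrev Eucl (n : ℕ) := EuclideanSpace ℝ (Fin n)


set_option maxHeartbeats 1000000 in
/-- Busemann–Petty type comparison: Let `K, M` be origin-symmetric star
bodies, `f ≥ 0` even continuous, `p ≥ 1`, and suppose `D` is an origin-symmetric star
body, `a ≥ 1`, with `D ⊆ M ⊆ aD`, and `‖·‖_D^p` admits the cosine representation by a
finite Borel measure `ν` on `S^{n-1}`. If `∫_K |⟨x,ξ⟩|^p f ≤ ∫_M |⟨x,ξ⟩|^p f` for every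
unit `ξ`, then `∫_K f ≤ a^p ∫_M f`. -/
theorem busemann_petty_type
    {n : ℕ} (hn : 1 ≤ n)
    (K M D : Set (EuclideanSpace ℝ (Fin n)))
    (hK : IsStarBody K) (hM : IsStarBody M) (hD : IsStarBody D)
    (hKs : K = -K) (hMs : M = -M) (hDs : D = -D)
    (f : EuclideanSpace ℝ (Fin n) → ℝ)
    (hf : Continuous f) (hf0 : ∀ x, 0 ≤ f x) (hfe : ∀ x, f (-x) = f x)
    (p : ℝ) (hp : 1 ≤ p)
    (a : ℝ) (ha : 1 ≤ a) (hDM : D ⊆ M) (hMaD : M ⊆ a • D)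
    (ν : Measure (sphere (0 : EuclideanSpace ℝ (Fin n)) 1)) [IsFiniteMeasure ν]
    (hrep : ∀ x : EuclideanSpace ℝ (Fin n),
      gauge D x ^ p = ∫ θ, |⟪x, (θ : EuclideanSpace ℝ (Fin n))⟫| ^ p ∂ν)
    (hcomp : ∀ ξ : EuclideanSpace ℝ (Fin n), ‖ξ‖ = 1 →
      ∫ x in K, |⟪x, ξ⟫| ^ p * f x ≤ ∫ x in M, |⟪x, ξ⟫| ^ p * f x) :
    ∫ x in K, f x ≤ a ^ p * ∫ x in M, f x := by
  have hp0 : (0:ℝ) ≤ p := by linarith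
  set g : Eucl n → ℝ := fun x => gauge D x ^ p with hg_def
  have hg_cont : Continuous g := hD.2.2.2.1.rpow_const (fun x => Or.inr hp0)
  have hg_nonneg : ∀ x, 0 ≤ g x := fun x => Real.rpow_nonneg (gauge_nonneg _) _
  have hKm : MeasurableSet K := hK.1.measurableSet
  have hMm : MeasurableSet M := hM.1.measurableSet
  -- continuity of the integrand in both variables
  have hcont2 : Continuous (fun q : Eucl n × sphere (0:Eucl n) 1 => |⟪q.1, (q.2 : Eucl n)⟫| ^ p * f q.1) := by
    have h1 : Continuous (fun q : Eucl n × sphere (0:Eucl n) 1 => ⟪q.1, (q.2 : Eucl n)⟫) :=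
      continuous_fst.inner (continuous_subtype_val.comp continuous_snd)
    have h2 : Continuous (fun q : Eucl n × sphere (0:Eucl n) 1 => |⟪q.1, (q.2 : Eucl n)⟫| ^ p) :=
      (h1.abs).rpow_const (fun q => Or.inr hp0)
    exact h2.mul (hf.comp continuous_fst)
  have hFmeas : Measurable (Function.uncurry fun (x : Eucl n) (θ : sphere (0:Eucl n) 1) =>
      ENNReal.ofReal (|⟪x, (θ : Eucl n)⟫| ^ p * f x)) := hcont2.measurable.ennreal_ofReal
  have hθnn : ∀ (x : Eucl n) (θ : sphere (0:Eucl n) 1), 0 ≤ |⟪x, (θ : Eucl n)⟫| ^ p * f x :=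
    fun x θ => mul_nonneg (Real.rpow_nonneg (abs_nonneg _) _) (hf0 x)
  -- pointwise representation
  have hpt : ∀ x : Eucl n, ENNReal.ofReal (g x * f x)
      = ∫⁻ θ, ENNReal.ofReal (|⟪x, (θ : Eucl n)⟫| ^ p * f x) ∂ν := by
    intro x
    have hci : Continuous (fun θ : sphere (0:Eucl n) 1 => |⟪x, (θ : Eucl n)⟫| ^ p * f x) := by
      have h1 : Continuous (fun θ : sphere (0:Eucl n) 1 => ⟪x, (θ : Eucl n)⟫) :=
        continuous_const.inner continuous_subtype_val
      have h2 : Continuous (fun θ : sphere (0:Eucl n) 1 => |⟪x, (θ : Eucl n)⟫| ^ p) :=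
        (h1.abs).rpow_const (fun q => Or.inr hp0)
      exact h2.mul continuous_const
    have hint : Integrable (fun θ : sphere (0:Eucl n) 1 => |⟪x, (θ : Eucl n)⟫| ^ p * f x) ν := by
      have := hci.continuousOn.integrableOn_compact (isCompact_univ (X := sphere (0:Eucl n) 1)) (μ := ν)
      rwa [integrableOn_univ] at this
    rw [← MeasureTheory.ofReal_integral_eq_lintegral_ofReal hint (ae_of_all _ (fun θ => hθnn x θ))]
    congr 1
    rw [hg_def]
    simp only [hrep x]
    exact (integral_mul_const (f x) _).symm
  -- swap integrals over a measurable set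
  have hswap : ∀ S : Set (Eucl n), MeasurableSet S →
      ∫⁻ x in S, ENNReal.ofReal (g x * f x)
        = ∫⁻ θ, (∫⁻ x in S, ENNReal.ofReal (|⟪x, (θ : Eucl n)⟫| ^ p * f x)) ∂ν := by
    intro S hSm
    calc ∫⁻ x in S, ENNReal.ofReal (g x * f x)
        = ∫⁻ x in S, ∫⁻ θ, ENNReal.ofReal (|⟪x, (θ : Eucl n)⟫| ^ p * f x) ∂ν :=
          lintegral_congr fun x => hpt x
      _ = ∫⁻ θ, (∫⁻ x in S, ENNReal.ofReal (|⟪x, (θ : Eucl n)⟫| ^ p * f x)) ∂ν :=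
          lintegral_lintegral_swap hFmeas.aemeasurable
  -- per-direction comparison at lintegral level
  have hθle : ∀ θ : sphere (0:Eucl n) 1,
      ∫⁻ x in K, ENNReal.ofReal (|⟪x, (θ : Eucl n)⟫| ^ p * f x)
        ≤ ∫⁻ x in M, ENNReal.ofReal (|⟪x, (θ : Eucl n)⟫| ^ p * f x) := by
    intro θ
    have hu : ‖(θ : Eucl n)‖ = 1 := by
      have := θ.2
      rwa [mem_sphere_zero_iff_norm] at this
    have hcx : Continuous (fun x : Eucl n => |⟪x, (θ : Eucl n)⟫| ^ p * f x) := by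
      have h1 : Continuous (fun x : Eucl n => ⟪x, (θ : Eucl n)⟫) :=
        continuous_id.inner continuous_const
      have h2 : Continuous (fun x : Eucl n => |⟪x, (θ : Eucl n)⟫| ^ p) :=
        (h1.abs).rpow_const (fun q => Or.inr hp0)
      exact h2.mul hf
    have hIK : IntegrableOn (fun x : Eucl n => |⟪x, (θ : Eucl n)⟫| ^ p * f x) K :=
      hcx.continuousOn.integrableOn_compact hK.1
    have hIM : IntegrableOn (fun x : Eucl n => |⟪x, (θ : Eucl n)⟫| ^ p * f x) M :=
      hcx.continuousOn.integrableOn_compact hM.1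
    rw [← MeasureTheory.ofReal_integral_eq_lintegral_ofReal hIK (ae_of_all _ (fun x => hθnn x θ)),
      ← MeasureTheory.ofReal_integral_eq_lintegral_ofReal hIM (ae_of_all _ (fun x => hθnn x θ))]
    exact ENNReal.ofReal_le_ofReal (hcomp _ hu)
  -- key comparison for g·f
  have hIgfK : IntegrableOn (fun x => g x * f x) K :=
    (hg_cont.mul hf).continuousOn.integrableOn_compact hK.1
  have hIgfM : IntegrableOn (fun x => g x * f x) M :=
    (hg_cont.mul hf).continuousOn.integrableOn_compact hM.1
  have hgfnn : ∀ x, 0 ≤ g x * f x := fun x => mul_nonneg (hg_nonneg x) (hf0 x)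
  have hgf : ∫ x in K, g x * f x ≤ ∫ x in M, g x * f x := by
    have h1 : ENNReal.ofReal (∫ x in K, g x * f x) ≤ ENNReal.ofReal (∫ x in M, g x * f x) := by
      rw [MeasureTheory.ofReal_integral_eq_lintegral_ofReal hIgfK (ae_of_all _ hgfnn),
        MeasureTheory.ofReal_integral_eq_lintegral_ofReal hIgfM (ae_of_all _ hgfnn),
        hswap K hKm, hswap M hMm]
      exact lintegral_mono fun θ => hθle θ
    exact (ENNReal.ofReal_le_ofReal_iff (setIntegral_nonneg hMm fun x _ => hgfnn x)).mp h1
  -- integrability of f on pieces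
  have hIfK : IntegrableOn f K := hf.continuousOn.integrableOn_compact hK.1
  have hIfM : IntegrableOn f M := hf.continuousOn.integrableOn_compact hM.1
  -- splitting
  have hdisjK : Disjoint (K ∩ M) (K \ M) :=
    (disjoint_sdiff_right (s := M) (t := K)).mono_left inter_subset_right
  have hdisjM : Disjoint (M ∩ K) (M \ K) :=
    (disjoint_sdiff_right (s := K) (t := M)).mono_left inter_subset_right
  have hKeq : (K ∩ M) ∪ (K \ M) = K := Set.inter_union_diff K M
  have hMeq : (M ∩ K) ∪ (M \ K) = M := Set.inter_union_diff M K
  have hsplit : ∀ (h : Eucl n → ℝ) (S T : Set (Eucl n)), MeasurableSet S → MeasurableSet T →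
      IntegrableOn h S → ∫ x in S, h x = (∫ x in S ∩ T, h x) + ∫ x in S \ T, h x := by
    intro h S T hSm hTm hI
    rw [← setIntegral_union ((disjoint_sdiff_right (s := T) (t := S)).mono_left inter_subset_right)
      (hSm.diff hTm) (hI.mono_set inter_subset_left) (hI.mono_set (diff_subset)),
      Set.inter_union_diff]
  -- from hgf deduce comparison on the symmetric differences
  have hgf' : ∫ x in K \ M, g x * f x ≤ ∫ x in M \ K, g x * f x := by
    have h1 := hsplit (fun x => g x * f x) K M hKm hMm hIgfK
    have h2 := hsplit (fun x => g x * f x) M K hMm hKm hIgfM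
    rw [h1, h2, Set.inter_comm M K] at hgf
    linarith
  -- on K \ M : f ≤ g f
  have hKM : ∫ x in K \ M, f x ≤ ∫ x in K \ M, g x * f x := by
    apply setIntegral_mono_on (hIfK.mono_set diff_subset) (hIgfK.mono_set diff_subset)
      (hKm.diff hMm)
    intro x hx
    have hge : (1:ℝ) ≤ gauge D x := by
      by_contra h
      push_neg at h
      exact hx.2 (hDM (hD.mem_of_gauge_lt_one h))
    have hge' : (1:ℝ) ≤ g x := by
      have := Real.rpow_le_rpow (by norm_num) hge hp0
      rwa [Real.one_rpow] at this
    calc f x = 1 * f x := (one_mul _).symm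
      _ ≤ g x * f x := mul_le_mul_of_nonneg_right hge' (hf0 x)
  -- on M \ K : g f ≤ a^p f
  have hMK : ∫ x in M \ K, g x * f x ≤ a ^ p * ∫ x in M \ K, f x := by
    rw [← integral_const_mul]
    apply setIntegral_mono_on (hIgfM.mono_set diff_subset)
      ((hIfM.mono_set diff_subset).const_mul _) (hMm.diff hKm)
    intro x hx
    have hle : gauge D x ≤ a := gauge_le_of_mem (by linarith) (hMaD hx.1)
    have hle' : g x ≤ a ^ p := Real.rpow_le_rpow (gauge_nonneg _) hle hp0
    exact mul_le_mul_of_nonneg_right hle' (hf0 x)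
  -- wrap up
  have hap1 : (1:ℝ) ≤ a ^ p := by
    have := Real.rpow_le_rpow (by norm_num) ha hp0
    rwa [Real.one_rpow] at this
  have hI1nn : 0 ≤ ∫ x in K ∩ M, f x :=
    setIntegral_nonneg (hKm.inter hMm) fun x _ => hf0 x
  have h3nn : 0 ≤ ∫ x in M \ K, f x :=
    setIntegral_nonneg (hMm.diff hKm) fun x _ => hf0 x
  have hKint : ∫ x in K, f x = (∫ x in K ∩ M, f x) + ∫ x in K \ M, f x :=
    hsplit f K M hKm hMm hIfK
  have hMint : ∫ x in M, f x = (∫ x in M ∩ K, f x) + ∫ x in M \ K, f x :=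
    hsplit f M K hMm hKm hIfM
  rw [hKint, hMint, Set.inter_comm M K, mul_add]
  have c1 : ∫ x in K ∩ M, f x ≤ a ^ p * ∫ x in K ∩ M, f x := le_mul_of_one_le_left hI1nn hap1
  have c2 : ∫ x in K \ M, f x ≤ a ^ p * ∫ x in M \ K, f x :=
    le_trans hKM (le_trans hgf' hMK)
  linarith
end

section
/- For any centrally-symmetric convex body K ⊆ ℝⁿ of volume 1 and any even Borel measurable probability density f on K, and any p ≥ 1, there exists a unit vector ξ with ∫_K |⟨x,ξ⟩|^p f(x) dx ≤ (C √(pn))^p, where C is an absolute constant. Equivalently, γ(p,n) ≤ C√(pn) where γ(p,n) is the smallest γ such that min_{ξ∈S^{n-1}} ∫_K |⟨x,ξ⟩|^p f dx ≤ γ^p |K|^{p/n} ∫_K f dx for all symmetric convex bodies K and all even nonnegative f on K. -/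
open MeasureTheory Metric
open scoped RealInnerProductSpace ENNReal

/-!
If a symmetric convex body `K ⊆ ℝⁿ` satisfied `sup_K |⟪x, ξ⟫| > 2√n` for every unit vector `ξ`,
then by Hahn–Banach it would contain the Euclidean ball of radius `2√n`, hence the cube `[-2, 2]ⁿ`
of volume `4ⁿ > 1 = |K|`. So some unit `ξ` has `|⟪x, ξ⟫| ≤ 2√n` on `K`, and integrating
`|⟪x, ξ⟫| ^ p ≤ (2√n) ^ p` against the probability density `f` gives the bound with `C = 2`.
-/

theorem closedBall_subset_of_forall_exists_le_apply {E : Type*} [NormedAddCommGroup E]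
    [NormedSpace ℝ E] {K : Set E} (hconv : Convex ℝ K) (hclosed : IsClosed K) {r : ℝ}
    (h : ∀ g : StrongDual ℝ E, ∃ x ∈ K, r * ‖g‖ ≤ g x) : closedBall 0 r ⊆ K := by
  intro y hy
  by_contra hyK
  obtain ⟨g, u, hgK, hgy⟩ := geometric_hahn_banach_closed_point hconv hclosed hyK
  obtain ⟨x, hxK, hx⟩ := h g
  have hgy_le : g y ≤ r * ‖g‖ :=
    calc g y ≤ ‖g‖ * ‖y‖ := (Real.le_norm_self _).trans (g.le_opNorm y)
      _ ≤ ‖g‖ * r := by gcongr; exact mem_closedBall_zero_iff.mp hy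
      _ = r * ‖g‖ := mul_comm _ _
  linarith [hgK x hxK]

theorem closedBall_subset_of_forall_exists_le_abs_inner {E : Type*} [NormedAddCommGroup E]
    [InnerProductSpace ℝ E] [CompleteSpace E] {K : Set E} (hconv : Convex ℝ K)
    (hclosed : IsClosed K) (hsymm : -K = K) (hne : K.Nonempty) {r : ℝ}
    (h : ∀ ξ : E, ‖ξ‖ = 1 → ∃ x ∈ K, r ≤ |⟪x, ξ⟫|) : closedBall 0 r ⊆ K := by
  refine closedBall_subset_of_forall_exists_le_apply hconv hclosed fun g => ?_
  rcases eq_or_ne g 0 with rfl | hg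
  · obtain ⟨x, hx⟩ := hne
    exact ⟨x, hx, by simp⟩
  set v := (InnerProductSpace.toDual ℝ E).symm g
  have hgv : ∀ x, ⟪x, v⟫ = g x := fun x => by
    rw [real_inner_comm]; exact InnerProductSpace.toDual_symm_apply
  have hg_pos : 0 < ‖g‖ := norm_pos_iff.mpr hg
  have hv : ‖v‖ = ‖g‖ := LinearIsometryEquiv.norm_map _ _
  obtain ⟨x, hxK, hx⟩ := h (‖g‖⁻¹ • v) (by rw [norm_smul, norm_inv, norm_norm, hv,
    inv_mul_cancel₀ hg_pos.ne'])
  rw [real_inner_smul_right, hgv, abs_mul, abs_inv, abs_norm, inv_mul_eq_div,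
    le_div_iff₀ hg_pos] at hx
  rcases abs_cases (g x) with ⟨hgx, _⟩ | ⟨hgx, _⟩
  · exact ⟨x, hxK, hgx ▸ hx⟩
  · refine ⟨-x, hsymm ▸ Set.neg_mem_neg.mpr hxK, ?_⟩
    rwa [map_neg, ← hgx]

theorem le_volume_closedBall_mul_sqrt_card {ι : Type*} [Fintype ι] {s : ℝ} (hs : 0 ≤ s) :
    ENNReal.ofReal ((2 * s) ^ Fintype.card ι) ≤
      volume (closedBall (0 : EuclideanSpace ℝ ι) (s * √(Fintype.card ι))) := by
  have hcube : WithLp.ofLp ⁻¹' closedBall (0 : ι → ℝ) s ⊆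
      closedBall (0 : EuclideanSpace ℝ ι) (s * √(Fintype.card ι)) := by
    intro x hx
    have hxi : ∀ i, ‖x i‖ ^ 2 ≤ s ^ 2 := fun i => by
      gcongr
      exact (pi_norm_le_iff_of_nonneg hs).mp (mem_closedBall_zero_iff.mp hx) i
    rw [mem_closedBall_zero_iff, EuclideanSpace.norm_eq, mul_comm, ← Real.sqrt_sq hs,
      ← Real.sqrt_mul (Nat.cast_nonneg _)]
    gcongr
    simpa using Finset.sum_le_sum fun i (_ : i ∈ Finset.univ) => hxi i
  calc ENNReal.ofReal ((2 * s) ^ Fintype.card ι)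
      = volume (WithLp.ofLp ⁻¹' closedBall (0 : ι → ℝ) s) := by
        rw [(PiLp.volume_preserving_ofLp ι).measure_preimage
          measurableSet_closedBall.nullMeasurableSet, Real.volume_pi_closedBall _ hs]
    _ ≤ _ := measure_mono hcube

theorem exists_forall_abs_inner_le_of_volume_lt {ι : Type*} [Fintype ι]
    {K : Set (EuclideanSpace ℝ ι)} (hconv : Convex ℝ K) (hclosed : IsClosed K) (hsymm : -K = K)
    (hne : K.Nonempty) {s : ℝ} (hs : 0 ≤ s)
    (hvol : volume K < ENNReal.ofReal ((2 * s) ^ Fintype.card ι)) :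
    ∃ ξ : EuclideanSpace ℝ ι, ‖ξ‖ = 1 ∧ ∀ x ∈ K, |⟪x, ξ⟫| ≤ s * √(Fintype.card ι) := by
  by_contra! hwide
  have hball := closedBall_subset_of_forall_exists_le_abs_inner hconv hclosed hsymm hne
    fun ξ hξ => (hwide ξ hξ).imp fun _ ⟨hx, hlt⟩ => ⟨hx, hlt.le⟩
  exact hvol.not_ge ((le_volume_closedBall_mul_sqrt_card hs).trans (measure_mono hball))

theorem setIntegral_mul_le_mul_setIntegral {α : Type*} [MeasurableSpace α] {μ : Measure α}
    {s : Set α} (hs : MeasurableSet s) {f h : α → ℝ} {M : ℝ} (hf : IntegrableOn f s μ)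
    (hf0 : ∀ x ∈ s, 0 ≤ f x) (hh0 : ∀ x ∈ s, 0 ≤ h x) (hhM : ∀ x ∈ s, h x ≤ M) :
    ∫ x in s, h x * f x ∂μ ≤ M * ∫ x in s, f x ∂μ := by
  rw [← integral_const_mul]
  refine integral_mono_of_nonneg ?_ (hf.const_mul M) ?_ <;>
    filter_upwards [ae_restrict_mem hs] with x hx
  · exact mul_nonneg (hh0 x hx) (hf0 x hx)
  · exact mul_le_mul_of_nonneg_right (hhM x hx) (hf0 x hx)

/-- There is an absolute constant `C > 0` such that for any
centrally-symmetric convex body `K ⊆ ℝⁿ` of volume 1, any even Borel measurable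
probability density `f` on `K`, and any `p ≥ 1`, there exists a unit vector `ξ` with
`∫_K |⟨x,ξ⟩|^p f(x) dx ≤ (C √(pn))^p`. -/
theorem gamma_upper_bound :
    ∃ C > (0 : ℝ), ∀ n : ℕ, 1 ≤ n → ∀ p : ℝ, 1 ≤ p →
      ∀ K : Set (EuclideanSpace ℝ (Fin n)),
        Convex ℝ K → IsCompact K → K = -K → (interior K).Nonempty →
        volume K = 1 →
      ∀ f : EuclideanSpace ℝ (Fin n) → ℝ,
        Measurable f → (∀ x, 0 ≤ f x) → (∀ x, f (-x) = f x) →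
        (∫ x in K, f x) = 1 →
        ∃ ξ : EuclideanSpace ℝ (Fin n), ‖ξ‖ = 1 ∧
          ∫ x in K, |⟪x, ξ⟫| ^ p * f x ≤ (C * Real.sqrt (p * n)) ^ p := by
  refine ⟨2, two_pos, fun n hn p hp K hKconv hKcomp hKsymm hKint hKvol f _ hf0 _ hf1 => ?_⟩
  have hvol : volume K < ENNReal.ofReal ((2 * 2) ^ Fintype.card (Fin n)) := by
    rw [hKvol, Fintype.card_fin, ENNReal.one_lt_ofReal]
    exact one_lt_pow₀ (by norm_num) (by omega)
  obtain ⟨ξ, hξ, hwidth⟩ := exists_forall_abs_inner_le_of_volume_lt hKconv hKcomp.isClosed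
    hKsymm.symm (hKint.mono interior_subset) zero_le_two hvol
  rw [Fintype.card_fin] at hwidth
  have hfK : IntegrableOn f K := by
    by_contra hf
    simp [integral_undef hf] at hf1
  have hp0 : 0 ≤ p := zero_le_one.trans hp
  refine ⟨ξ, hξ, ?_⟩
  calc ∫ x in K, |⟪x, ξ⟫| ^ p * f x
      ≤ (2 * √n) ^ p * ∫ x in K, f x :=
        setIntegral_mul_le_mul_setIntegral hKcomp.measurableSet hfK (fun x _ => hf0 x)
          (fun x _ => by positivity)
          (fun x hx => Real.rpow_le_rpow (abs_nonneg _) (hwidth x hx) hp0)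
    _ = (2 * √n) ^ p := by rw [hf1, mul_one]
    _ ≤ (2 * √(p * n)) ^ p := by
        gcongr
        exact le_mul_of_one_le_left (Nat.cast_nonneg n) hp
end

section
/- For a measurable g : ℝ → [0,1] and -1 < q < p, if A > 0 satisfies ∫_{-∞}^{∞} |t|^q g(t) dt = ∫_{-A}^{A} |t|^q dt, then ∫_{|t|≤A} (1-g(t))|t|^p dt ≤ A^{p-q} ∫_{|t|≤A} (1-g(t))|t|^q dt and ∫_{|t|>A} g(t)|t|^p dt ≥ A^{p-q} ∫_{|t|>A} g(t)|t|^q dt; consequently ∫_{|t|≤A}(1-g)|t|^p dt - ∫_{|t|>A} g|t|^p dt ≤ 0. -/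
open MeasureTheory
open scoped ENNReal
open Set

/-!
Write `|t| ^ p = |t| ^ (p - q) * |t| ^ q`: the factor `|t| ^ (p - q)` is at most `A ^ (p - q)` on
`|t| ≤ A` and at least `A ^ (p - q)` on `|t| > A`. The choice of `A` says that `g |t| ^ q` has the
same total mass as `|t| ^ q` on `[-A, A]`, so the mass `(1 - g) |t| ^ q` missing inside `[-A, A]`
equals the mass `g |t| ^ q` outside; chaining the two comparisons through this common value gives
the last inequality.
-/

namespace Real

lemma rpow_le_rpow_sub_mul_rpow_s19 {x A p q : ℝ} (hx : 0 < x) (hxA : x ≤ A) (hqp : q ≤ p) :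
    x ^ p ≤ A ^ (p - q) * x ^ q := by
  calc x ^ p = x ^ (p - q) * x ^ q := by rw [← rpow_add hx, sub_add_cancel]
    _ ≤ A ^ (p - q) * x ^ q := by gcongr

lemma rpow_sub_mul_rpow_le_rpow_s19 {x A p q : ℝ} (hA : 0 ≤ A) (hAx : A < x) (hqp : q ≤ p) :
    A ^ (p - q) * x ^ q ≤ x ^ p := by
  calc A ^ (p - q) * x ^ q ≤ x ^ (p - q) * x ^ q := by
        gcongr; exact rpow_nonneg (hA.trans hAx.le) q
    _ = x ^ p := by rw [← rpow_add (hA.trans_lt hAx), sub_add_cancel]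

end Real

section WeightedMoments

variable {μ : Measure ℝ} {w : ℝ → ℝ} {p q : ℝ}

lemma setLIntegral_abs_le_mul_rpow_le [NullSingletonClass μ] (hw : ∀ t, 0 ≤ w t) (hqp : q ≤ p)
    (A : ℝ) :
    ∫⁻ t in {t | |t| ≤ A}, ENNReal.ofReal (w t * |t| ^ p) ∂μ ≤
      ENNReal.ofReal (A ^ (p - q)) *
        ∫⁻ t in {t | |t| ≤ A}, ENNReal.ofReal (w t * |t| ^ q) ∂μ := by
  rw [← lintegral_const_mul' _ _ ENNReal.ofReal_ne_top]
  refine lintegral_mono_ae ?_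
  -- `t = 0` must be discarded: `0 ^ 0 = 1` while `0 ^ q = 0` for `q ≠ 0`
  have hne : ∀ᵐ t ∂μ.restrict {t | |t| ≤ A}, t ≠ 0 := ae_restrict_of_ae (μ.ae_ne 0)
  filter_upwards [ae_restrict_mem (measurableSet_le measurable_abs measurable_const), hne]
    with t htA ht
  rw [← ENNReal.ofReal_mul (Real.rpow_nonneg ((abs_nonneg t).trans htA) _)]
  refine ENNReal.ofReal_le_ofReal ?_
  have := Real.rpow_le_rpow_sub_mul_rpow_s19 (abs_pos.2 ht) htA hqp
  nlinarith [hw t]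

lemma mul_setLIntegral_lt_abs_le_mul_rpow (hw : ∀ t, 0 ≤ w t) (hqp : q ≤ p) {A : ℝ}
    (hA : 0 ≤ A) :
    ENNReal.ofReal (A ^ (p - q)) *
        ∫⁻ t in {t | A < |t|}, ENNReal.ofReal (w t * |t| ^ q) ∂μ ≤
      ∫⁻ t in {t | A < |t|}, ENNReal.ofReal (w t * |t| ^ p) ∂μ := by
  rw [← lintegral_const_mul' _ _ ENNReal.ofReal_ne_top]
  refine setLIntegral_mono' (measurableSet_lt measurable_const measurable_abs) fun t hAt => ?_
  rw [← ENNReal.ofReal_mul (Real.rpow_nonneg hA _)]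
  refine ENNReal.ofReal_le_ofReal ?_
  have := Real.rpow_sub_mul_rpow_le_rpow_s19 hA hAt hqp
  nlinarith [hw t]

end WeightedMoments

lemma lintegral_comp_abs (f : ℝ → ℝ≥0∞) : ∫⁻ x, f |x| = 2 * ∫⁻ x in Ioi 0, f x := by
  have hneg : ∫⁻ x in Iic 0, f |x| = ∫⁻ x in Ioi 0, f x := by
    have := (Measure.measurePreserving_neg volume).setLIntegral_comp_preimage_emb
      measurableEmbedding_neg (fun x => f |x|) (Ici 0)
    simp only [abs_neg, neg_preimage, neg_Ici, neg_zero] at this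
    rw [this, restrict_Ioi_eq_restrict_Ici]
    exact setLIntegral_congr_fun measurableSet_Ici fun x hx => by rw [abs_of_nonneg hx]
  have hpos : ∫⁻ x in Ioi 0, f |x| = ∫⁻ x in Ioi 0, f x :=
    setLIntegral_congr_fun measurableSet_Ioi fun x hx => by rw [abs_of_pos hx]
  rw [← lintegral_add_compl _ measurableSet_Ioi, compl_Ioi, hneg, hpos, two_mul, add_comm]

lemma setLIntegral_abs_le_abs_rpow {q A : ℝ} (hq : -1 < q) (hA : 0 ≤ A) :
    ∫⁻ t in {t | |t| ≤ A}, ENNReal.ofReal (|t| ^ q) =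
      ENNReal.ofReal (2 / (q + 1) * A ^ (q + 1)) := by
  have hint : IntegrableOn (fun x : ℝ => x ^ q) (Ioc 0 A) :=
    (intervalIntegrable_iff_integrableOn_Ioc_of_le hA).1
      (intervalIntegral.intervalIntegrable_rpow' hq)
  have hval : ∫ x in Ioc 0 A, x ^ q = A ^ (q + 1) / (q + 1) := by
    rw [← intervalIntegral.integral_of_le hA, integral_rpow (Or.inl hq),
      Real.zero_rpow (by linarith), sub_zero]
  calc ∫⁻ t in {t | |t| ≤ A}, ENNReal.ofReal (|t| ^ q)
      = ∫⁻ t, (Iic A).indicator (fun x => ENNReal.ofReal (x ^ q)) |t| := by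
        rw [← lintegral_indicator (measurableSet_le measurable_abs measurable_const)]
        rfl
    _ = 2 * ∫⁻ x in Ioc 0 A, ENNReal.ofReal (x ^ q) := by
        rw [lintegral_comp_abs, lintegral_indicator measurableSet_Iic,
          Measure.restrict_restrict measurableSet_Iic, Iic_inter_Ioi]
    _ = ENNReal.ofReal (2 / (q + 1) * A ^ (q + 1)) := by
        rw [← ofReal_integral_eq_lintegral_ofReal hint
          (ae_restrict_of_forall_mem measurableSet_Ioc fun x hx => Real.rpow_nonneg hx.1.le q),
          hval, ← ENNReal.ofReal_ofNat 2, ← ENNReal.ofReal_mul zero_le_two]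
        congr 1
        ring

lemma setLIntegral_one_sub_mul_eq_setLIntegral_compl_mul {α : Type*} [MeasurableSpace α]
    {μ : Measure α} {g φ : α → ℝ} {S : Set α} (hS : MeasurableSet S)
    (hgφ : AEMeasurable (fun x => g x * φ x) μ) (hg0 : ∀ x, 0 ≤ g x) (hg1 : ∀ x, g x ≤ 1)
    (hφ : ∀ x, 0 ≤ φ x)
    (hmass : ∫⁻ x, ENNReal.ofReal (g x * φ x) ∂μ =
      ∫⁻ x in S, ENNReal.ofReal (φ x) ∂μ)
    (hfin : ∫⁻ x in S, ENNReal.ofReal (φ x) ∂μ ≠ ∞) :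
    ∫⁻ x in S, ENNReal.ofReal ((1 - g x) * φ x) ∂μ =
      ∫⁻ x in Sᶜ, ENNReal.ofReal (g x * φ x) ∂μ := by
  have hS_fin : ∫⁻ x in S, ENNReal.ofReal (g x * φ x) ∂μ ≠ ∞ := by
    refine ne_top_of_le_ne_top hfin (lintegral_mono fun x => ENNReal.ofReal_le_ofReal ?_)
    nlinarith [hg1 x, hφ x]
  calc ∫⁻ x in S, ENNReal.ofReal ((1 - g x) * φ x) ∂μ
      = ∫⁻ x in S, ENNReal.ofReal (φ x) - ENNReal.ofReal (g x * φ x) ∂μ := by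
        congr 1 with x
        rw [← ENNReal.ofReal_sub _ (mul_nonneg (hg0 x) (hφ x)), sub_mul, one_mul]
    _ = ∫⁻ x in S, ENNReal.ofReal (φ x) ∂μ -
          ∫⁻ x in S, ENNReal.ofReal (g x * φ x) ∂μ :=
        lintegral_sub' hgφ.ennreal_ofReal.restrict hS_fin (ae_of_all _ fun x =>
          ENNReal.ofReal_le_ofReal (by nlinarith [hg1 x, hφ x]))
    _ = ∫⁻ x in Sᶜ, ENNReal.ofReal (g x * φ x) ∂μ := by
        rw [← hmass, ← lintegral_add_compl _ hS, ENNReal.add_sub_cancel_left hS_fin]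

/-- For measurable `g : ℝ → [0,1]` and `-1 < q < p`, if `A > 0` satisfies
`∫ |t|^q g(t) dt = ∫_{-A}^A |t|^q dt = (2/(q+1)) A^(q+1)`, then
`∫_{|t|≤A} (1-g)|t|^p ≤ A^(p-q) ∫_{|t|≤A} (1-g)|t|^q`,
`∫_{|t|>A} g|t|^p ≥ A^(p-q) ∫_{|t|>A} g|t|^q`, and consequently
`∫_{|t|≤A} (1-g)|t|^p ≤ ∫_{|t|>A} g|t|^p`. -/
theorem cutting_argument
    (g : ℝ → ℝ) (hg : Measurable g) (hg0 : ∀ t, 0 ≤ g t) (hg1 : ∀ t, g t ≤ 1)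
    (q p : ℝ) (hq : -1 < q) (hqp : q < p)
    (A : ℝ) (hA : 0 < A)
    (hAq : ∫⁻ t : ℝ, ENNReal.ofReal (|t| ^ q * g t) =
      ENNReal.ofReal (2 / (q + 1) * A ^ (q + 1))) :
    (∫⁻ t in {t : ℝ | |t| ≤ A}, ENNReal.ofReal ((1 - g t) * |t| ^ p) ≤
        ENNReal.ofReal (A ^ (p - q)) *
          ∫⁻ t in {t : ℝ | |t| ≤ A}, ENNReal.ofReal ((1 - g t) * |t| ^ q)) ∧
    (ENNReal.ofReal (A ^ (p - q)) *
          ∫⁻ t in {t : ℝ | A < |t|}, ENNReal.ofReal (g t * |t| ^ q) ≤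
        ∫⁻ t in {t : ℝ | A < |t|}, ENNReal.ofReal (g t * |t| ^ p)) ∧
    (∫⁻ t in {t : ℝ | |t| ≤ A}, ENNReal.ofReal ((1 - g t) * |t| ^ p) ≤
        ∫⁻ t in {t : ℝ | A < |t|}, ENNReal.ofReal (g t * |t| ^ p)) := by
  have hmass := setLIntegral_abs_le_abs_rpow hq hA.le
  have hcompl : {t : ℝ | |t| ≤ A}ᶜ = {t | A < |t|} := by ext t; simp
  have hbalance := setLIntegral_one_sub_mul_eq_setLIntegral_compl_mul (φ := fun t => |t| ^ q)
    (measurableSet_le measurable_abs measurable_const) (hg.mul (by fun_prop)).aemeasurable hg0 hg1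
    (fun t => Real.rpow_nonneg (abs_nonneg t) q) (by simp_rw [hmass, ← hAq, mul_comm])
    (hmass ▸ ENNReal.ofReal_ne_top)
  rw [hcompl] at hbalance
  have hinner :=
    setLIntegral_abs_le_mul_rpow_le (μ := volume) (fun t => sub_nonneg.2 (hg1 t)) hqp.le A
  have houter := mul_setLIntegral_lt_abs_le_mul_rpow (μ := volume) hg0 hqp.le hA.le
  exact ⟨hinner, houter, hinner.trans (hbalance ▸ houter)⟩
end
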